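/- arXiv:1909.13278 — 2 statements merged into one kernel-verified Lean document; each statement's English description precedes it below -/
import Mathlib

section
/- Let $v_1,\dots,v_q$ be elements of a commutative ring. Define the $q\times q$ matrix $\Lambda$ with $\Lambda_{i,1} = e_i(v_1,\dots,v_q)$ for $i = 1,\dots,q$, $\Lambda_{i,i+1} = -1$ for $i = 1,\dots,q-1$, and all other entries zero. Define the $q\times q$ matrix $E$ with $E_{i,j} = e_{i-1}(v_1,\dots,\widehat{v_j},\dots,v_q)$. Then $\Lambda \cdot E = E \cdot \mathrm{diag}(v_1,\dots,v_q)$. -/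
open Finset Polynomial

/-- The `k`-th elementary symmetric polynomial of the family `v` restricted to
the index set `A`. -/
def esymmOn {R : Type*} [CommRing R] {ι : Type*} [DecidableEq ι]
    (A : Finset ι) (v : ι → R) (k : ℕ) : R :=
  ∑ s ∈ A.powersetCard k, ∏ i ∈ s, v i

/-- The matrix `Λ(b)` with `b 1, …, b q` in the first column, `-1` just above the
diagonal, and zeros elsewhere. -/
def lambdaMatrix {R : Type*} [CommRing R] (q : ℕ) (b : ℕ → R) :
    Matrix (Fin q) (Fin q) R :=
  Matrix.of fun i j =>
    if (j : ℕ) = 0 then b ((i : ℕ) + 1)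
    else if (j : ℕ) = (i : ℕ) + 1 then -1 else 0

/-- The `(r+q) × (r+q)` Sylvester matrix of `A` (regarded as having degree `r`,
with coefficients written `A = ∑ a_k t^(r-k)`) and `B` (regarded as having
degree `q`): the first `q` columns contain the coefficients `a_0, …, a_r` of `A`
starting on the diagonal, the last `r` columns those of `B`. -/
def sylvester {R : Type*} [CommRing R] (A B : Polynomial R) (r q : ℕ) :
    Matrix (Fin (r + q)) (Fin (r + q)) R :=
  Matrix.of fun i j =>
    if (j : ℕ) < q then
      (if (j : ℕ) ≤ (i : ℕ) ∧ (i : ℕ) ≤ (j : ℕ) + r then A.coeff (r + (j : ℕ) - (i : ℕ)) else 0)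
    else
      (if (j : ℕ) - q ≤ (i : ℕ) ∧ (i : ℕ) ≤ ((j : ℕ) - q) + q then
        B.coeff (q + ((j : ℕ) - q) - (i : ℕ)) else 0)

/-- The resultant of `A` (of degree `r`) and `B` (of degree `q`) with respect to
`t`: the determinant of their Sylvester matrix. -/
def resultant' {R : Type*} [CommRing R] (A B : Polynomial R) (r q : ℕ) : R :=
  (_root_.sylvester A B r q).det

/-! Row `i` of `Λ E` has, in column `j`, the entry `e_{i+1}(v) · e_0 - e_{i+1}(v without v_j)`.
Splitting the `(i+1)`-subsets by whether they contain `j` turns this into `v_j · e_i(v without v_j)`.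
In the last row the second term is absent, matching `e_q` of the `q - 1` remaining variables,
which is `0`. -/

theorem Multiset.esymm_cons {R : Type*} [CommSemiring R] (a : R) (s : Multiset R) (k : ℕ) :
    (a ::ₘ s).esymm (k + 1) = s.esymm (k + 1) + a * s.esymm k := by
  simp [Multiset.esymm, Multiset.powersetCard_cons, Multiset.sum_map_mul_left]

section esymmOn

variable {R ι : Type*} [CommRing R] [DecidableEq ι] (A : Finset ι) (v : ι → R)

theorem esymmOn_eq_esymm_map_val (k : ℕ) : esymmOn A v k = (A.val.map v).esymm k :=
  (Finset.esymm_map_val v A k).symm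

@[simp]
theorem esymmOn_zero : esymmOn A v 0 = 1 := by
  simp [esymmOn]

variable {A}

theorem esymmOn_eq_zero_of_card_lt {k : ℕ} (h : A.card < k) : esymmOn A v k = 0 := by
  simp [esymmOn, Finset.powersetCard_eq_empty.2 h]

theorem esymmOn_succ_of_mem {j : ι} (hj : j ∈ A) (k : ℕ) :
    esymmOn A v (k + 1) = esymmOn (A.erase j) v (k + 1) + v j * esymmOn (A.erase j) v k := by
  simp only [esymmOn_eq_esymm_map_val, Finset.erase_val, ← Multiset.esymm_cons,
    ← Multiset.map_cons, Multiset.cons_erase hj]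

end esymmOn

theorem lambdaMatrix_mul_of_apply {R : Type*} [CommRing R] {q : ℕ} (b : ℕ → R)
    (f : ℕ → Fin q → R) (hf : ∀ j, f q j = 0) (i j : Fin q) :
    (lambdaMatrix q b * Matrix.of fun (k : Fin q) j => f k j) i j
      = b (i + 1) * f 0 j - f (i + 1) j := by
  have hrow : ∀ k : ℕ, (if k = 0 then b (i + 1) else if k = i + 1 then -1 else 0) * f k j
      = (if k = 0 then b (i + 1) * f 0 j else 0) - (if k = i + 1 then f k j else 0) := by
    intro k
    split_ifs <;> first | omega | simp_all
  have hlast : (if (i : ℕ) + 1 ∈ Finset.range q then f (i + 1) j else 0) = f (i + 1) j := by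
    split_ifs with h
    · rfl
    · rw [show (i : ℕ) + 1 = q by simp at h; omega, hf]
  simp only [Matrix.mul_apply, lambdaMatrix, Matrix.of_apply]
  rw [Fin.sum_univ_eq_sum_range
      (fun k => (if k = 0 then b (i + 1) else if k = i + 1 then -1 else 0) * f k j),
    Finset.sum_congr rfl fun k _ => hrow k, Finset.sum_sub_distrib, Finset.sum_ite_eq',
    Finset.sum_ite_eq', hlast, if_pos (Finset.mem_range.2 i.pos)]

theorem lambda_mul_E_eq_E_mul_diag {R : Type*} [CommRing R] (q : ℕ) (v : Fin q → R) :
    lambdaMatrix q (fun k => esymmOn Finset.univ v k)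
        * (Matrix.of fun i j : Fin q => esymmOn (Finset.univ.erase j) v (i : ℕ))
      = (Matrix.of fun i j : Fin q => esymmOn (Finset.univ.erase j) v (i : ℕ))
          * Matrix.diagonal v := by
  ext i j
  have hcard (l : Fin q) : (Finset.univ.erase l).card < q := by
    simp [Finset.card_erase_of_mem, l.pos]
  rw [lambdaMatrix_mul_of_apply _ (fun k j => esymmOn (Finset.univ.erase j) v k)
      (fun l => esymmOn_eq_zero_of_card_lt v (hcard l)), Matrix.mul_diagonal, Matrix.of_apply,
    esymmOn_zero, esymmOn_succ_of_mem v (Finset.mem_univ j)]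
  ring
end

section
/- Let $s, u_1,\dots,u_r, v_1,\dots,v_q$ be elements of a commutative ring. Let $\Lambda$ be the $q\times q$ matrix with $\Lambda_{i,1} = e_i(v_1,\dots,v_q)$, $\Lambda_{i,i+1} = -1$, and other entries zero, and let $I$ be the $q\times q$ identity matrix. Then $\prod_{i=1}^{r}\prod_{j=1}^{q}(s + u_i + v_j) = \det\left(\sum_{k=0}^{r} e_k(u_1,\dots,u_r)\,(sI + \Lambda)^{r-k}\right)$. -/
/-!
With `M = s • 1 + Λ`, the matrix on the right is `P(M)` for `P = ∏ i, (X + u i)` (Vieta), so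
it factors as `∏ i, (M + u i • 1) = ∏ i, ((s + u i) • 1 + Λ)` and its determinant is
`∏ i, det ((s + u i) • 1 + Λ)`. The matrix `Λ` is a companion matrix: expanding along the last
row gives `det (t • 1 + Λ) = ∑ k, e_k(v) t ^ (q - k) = ∏ j, (t + v j)`.
-/

open Finset Polynomial

section Vieta

variable {R ι : Type*} [CommRing R]

theorem esymmOn_zero_s3 [DecidableEq ι] (A : Finset ι) (u : ι → R) : esymmOn A u 0 = 1 := by
  simp [esymmOn]

theorem prod_X_add_C_eq_sum_esymmOn [DecidableEq ι] (A : Finset ι) (u : ι → R) :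
    ∏ i ∈ A, (X + C (u i)) = ∑ k ∈ range (#A + 1), C (esymmOn A u k) * X ^ (#A - k) := by
  rw [prod_eq_multiset_prod, ← Function.comp_def (fun r => X + C r) u, ← Multiset.map_map,
    Multiset.prod_X_add_C_eq_sum_esymm, Multiset.card_map, card_def]
  simp_rw [esymm_map_val]
  rfl

theorem prod_add_eq_sum_esymmOn [DecidableEq ι] (A : Finset ι) (u : ι → R) (t : R) :
    ∏ i ∈ A, (t + u i) = ∑ k ∈ range (#A + 1), esymmOn A u k * t ^ (#A - k) := by
  simpa [eval_prod, eval_finsetSum] using congrArg (eval t) (prod_X_add_C_eq_sum_esymmOn A u)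

theorem det_aeval_prod_X_add_C {n : Type*} [Fintype n] [DecidableEq n] (M : Matrix n n R)
    (A : Finset ι) (u : ι → R) :
    (aeval M (∏ i ∈ A, (X + C (u i)))).det = ∏ i ∈ A, (M + u i • 1).det := by
  -- `Matrix n n R` is not commutative, so the product is pushed through `det` while still in `R[X]`.
  have h := map_prod (Matrix.detMonoidHom.comp (aeval (R := R) M).toRingHom.toMonoidHom)
    (fun i => X + C (u i)) A
  simp only [MonoidHom.comp_apply, Matrix.coe_detMonoidHom, RingHom.toMonoidHom_eq_coe,
    MonoidHom.coe_coe, AlgHom.toRingHom_eq_coe, RingHom.coe_coe] at h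
  rw [h]
  simp [Algebra.algebraMap_eq_smul_one]

end Vieta

section LambdaMatrix

variable {R : Type*} [CommRing R] (b : ℕ → R) (t : R) (q : ℕ)

theorem smul_one_add_lambdaMatrix_last_row (j : Fin (q + 1)) :
    (t • 1 + lambdaMatrix (q + 1) b) (Fin.last q) j
      = (if j = Fin.last q then t else 0) + (if j = 0 then b (q + 1) else 0) := by
  simp only [lambdaMatrix, Matrix.add_apply, Matrix.smul_apply, Matrix.one_apply, Matrix.of_apply,
    smul_eq_mul, mul_ite, mul_one, mul_zero, Fin.val_last, Fin.ext_iff, Fin.val_zero]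
  grind

theorem submatrix_castSucc_smul_one_add_lambdaMatrix :
    (t • 1 + lambdaMatrix (q + 1) b).submatrix Fin.castSucc Fin.castSucc
      = t • 1 + lambdaMatrix q b := by
  ext i j
  simp [lambdaMatrix, Matrix.one_apply, Fin.ext_iff (a := j.castSucc)]

theorem det_submatrix_castSucc_succ_smul_one_add_lambdaMatrix :
    ((t • 1 + lambdaMatrix (q + 1) b).submatrix Fin.castSucc Fin.succ).det = (-1) ^ q := by
  rw [Matrix.det_of_isLowerTriangular]
  · simp [lambdaMatrix, Fin.ext_iff (a := Fin.castSucc _)]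
  · intro i j hij
    rw [OrderDual.toDual_lt_toDual] at hij
    simp only [Matrix.submatrix_apply, Matrix.add_apply, Matrix.smul_apply, Matrix.one_apply,
      lambdaMatrix, Matrix.of_apply, Fin.ext_iff, Fin.val_castSucc, Fin.val_succ]
    split_ifs <;> simp_all <;> omega

theorem det_smul_one_add_lambdaMatrix (hb : b 0 = 1) :
    (t • 1 + lambdaMatrix q b).det = ∑ k ∈ range (q + 1), b k * t ^ (q - k) := by
  induction q with
  | zero => simp [hb]
  | succ q ih =>
    rw [Matrix.det_succ_row _ (Fin.last q)]
    simp only [smul_one_add_lambdaMatrix_last_row, mul_add, add_mul, mul_ite, ite_mul, mul_zero,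
      zero_mul, sum_add_distrib, sum_ite_eq', mem_univ, if_true, Fin.succAbove_last,
      Fin.succAbove_zero, submatrix_castSucc_smul_one_add_lambdaMatrix,
      det_submatrix_castSucc_succ_smul_one_add_lambdaMatrix, ih, Fin.val_last, Fin.val_zero]
    have hsign : (-1 : R) ^ (q + q) = 1 := Even.neg_one_pow ⟨q, rfl⟩
    have horner : ∑ k ∈ range (q + 1 + 1), b k * t ^ (q + 1 - k)
        = t * ∑ k ∈ range (q + 1), b k * t ^ (q - k) + b (q + 1) := by
      rw [sum_range_succ _ (q + 1), mul_sum, Nat.sub_self, pow_zero, mul_one]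
      congr 1
      refine sum_congr rfl fun k hk => ?_
      rw [Nat.sub_add_comm (Nat.lt_succ_iff.mp (mem_range.mp hk)), pow_succ]
      ring
    rw [horner]
    linear_combination (t * ∑ k ∈ range (q + 1), b k * t ^ (q - k) + b (q + 1)) * hsign

end LambdaMatrix

theorem det_smul_one_add_lambdaMatrix_esymmOn {R : Type*} [CommRing R] {q : ℕ} (v : Fin q → R)
    (t : R) : (t • 1 + lambdaMatrix q (esymmOn univ v)).det = ∏ j, (t + v j) := by
  rw [det_smul_one_add_lambdaMatrix _ _ _ (esymmOn_zero_s3 _ _), prod_add_eq_sum_esymmOn, card_univ,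
    Fintype.card_fin]

theorem prod_eq_det_sum_esymm_pow {R : Type*} [CommRing R] (r q : ℕ) (s : R)
    (u : Fin r → R) (v : Fin q → R) :
    (∏ i, ∏ j, (s + u i + v j))
      = (∑ k ∈ Finset.range (r + 1),
          esymmOn Finset.univ u k •
            (s • (1 : Matrix (Fin q) (Fin q) R)
              + lambdaMatrix q (fun m => esymmOn Finset.univ v m)) ^ (r - k)).det := by
  set Λ := lambdaMatrix q (fun m => esymmOn Finset.univ v m)
  have hP : ∑ k ∈ range (r + 1), esymmOn univ u k • (s • 1 + Λ) ^ (r - k)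
      = aeval (s • 1 + Λ) (∏ i, (X + C (u i))) := by
    simp [prod_X_add_C_eq_sum_esymmOn, Algebra.smul_def]
  rw [hP, det_aeval_prod_X_add_C]
  refine prod_congr rfl fun i _ => ?_
  rw [show s • 1 + Λ + u i • 1 = (s + u i) • 1 + Λ by module,
    det_smul_one_add_lambdaMatrix_esymmOn]
end
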